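/- For all r ≥ 1, all ζ > 0, all integers k ≥ 1, and all real t with |t| < ζ/3, taking ξ = −ζ one has max{ |q_k(t)|, |q_k(t) + r_k(t)| } ≤ (t²/2) κ̃₂ (|t|/ζ) ≤ (t²/4) κ̃₂. (Lemma 3.8.) -/

import Mathlib

/-!
For `ξ = -ζ`, integrating by parts against `e^{-ζu/ρ}` gives `κ̃_{n+1} ≤ (nρ/ζ) κ̃_n` for `n ≥ 2`.
Hence the moduli `(|t|/ρ)^n κ̃_n / n!` of the summands decay at least geometrically with ratio
`|t|/ζ < 1/3`, and `ρ²` times the `n = 3` summand is at most `t² κ̃₂ (|t|/ζ) / 3`. Since `q_k` is a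
partial sum and `q_k + r_k` the full sum of `ρ² ∑_{n ≥ 3}`, both norms are bounded by `ρ²` times
the sum of the moduli, which is at most `t² κ̃₂ (|t|/ζ) / 3 · 1/(1 - 1/3) = (t²/2) κ̃₂ (|t|/ζ)`.
-/

open MeasureTheory Finset

noncomputable section

/-- ρ = r^{d/2} -/
def rho (d : ℕ) (r : ℝ) : ℝ := r ^ ((d : ℝ) / 2)

/-- tilted cumulant coefficients κ̃_n = d₁ ∫₀¹ e^{ξu/ρ} u^{n-1-d/γ} du -/
def kt (d : ℕ) (γ r ξ : ℝ) (n : ℕ) : ℝ :=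
  (2 - (d : ℝ) / γ) *
    ∫ u in (0:ℝ)..1, Real.exp (ξ * u / rho d r) * u ^ ((n : ℝ) - 1 - (d : ℝ) / γ)

/-- q_k(t) = ρ² ∑_{n=3}^{k+2} (it/ρ)^n κ̃_n/n! -/
def qk (d : ℕ) (γ r ξ : ℝ) (k : ℕ) (t : ℝ) : ℂ :=
  ((rho d r : ℝ) : ℂ) ^ 2 *
    ∑ n ∈ Finset.Icc 3 (k + 2),
      (Complex.I * (t : ℂ) / ((rho d r : ℝ) : ℂ)) ^ n *
        ((kt d γ r ξ n / (n.factorial : ℝ) : ℝ) : ℂ)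

/-- r_k(t) = ρ² ∑_{n=k+3}^∞ (it/ρ)^n κ̃_n/n! -/
def rk (d : ℕ) (γ r ξ : ℝ) (k : ℕ) (t : ℝ) : ℂ :=
  ((rho d r : ℝ) : ℂ) ^ 2 *
    ∑' n : ℕ,
      (Complex.I * (t : ℂ) / ((rho d r : ℝ) : ℂ)) ^ (n + (k + 3)) *
        ((kt d γ r ξ (n + (k + 3)) / ((n + (k + 3)).factorial : ℝ) : ℝ) : ℂ)

theorem summable_and_tsum_le_of_succ_le_mul {u : ℕ → ℝ} {c : ℝ} (hu : ∀ n, 0 ≤ u n)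
    (hc₀ : 0 ≤ c) (hc₁ : c < 1) (h : ∀ n, u (n + 1) ≤ c * u n) :
    Summable u ∧ ∑' n, u n ≤ u 0 / (1 - c) := by
  have hgeom : ∀ n, u n ≤ u 0 * c ^ n := fun n =>
    (le_geom hc₀ n fun k _ => h k).trans_eq (mul_comm _ _)
  have hsum : Summable fun n => u 0 * c ^ n := (summable_geometric_of_lt_one hc₀ hc₁).mul_left _
  have hu_sum : Summable u := hsum.of_nonneg_of_le hu hgeom
  refine ⟨hu_sum, ?_⟩
  calc ∑' n, u n ≤ ∑' n, u 0 * c ^ n := hu_sum.tsum_le_tsum hgeom hsum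
    _ = u 0 / (1 - c) := by rw [tsum_mul_left, tsum_geometric_of_lt_one hc₀ hc₁, div_eq_mul_inv]

theorem integral_exp_neg_mul_rpow_le {ζ ρ p : ℝ} (hζ : 0 < ζ) (hρ : 0 < ρ) (hp : 1 ≤ p) :
    ∫ u in (0:ℝ)..1, Real.exp (-ζ * u / ρ) * u ^ p ≤
      p * ρ / ζ * ∫ u in (0:ℝ)..1, Real.exp (-ζ * u / ρ) * u ^ (p - 1) := by
  have hexp : ∀ x : ℝ,
      HasDerivAt (fun y => -(ρ / ζ) * Real.exp (-ζ * y / ρ)) (Real.exp (-ζ * x / ρ)) x := by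
    intro x
    refine ((((hasDerivAt_id x).const_mul (-ζ)).div_const ρ).exp.const_mul
      (-(ρ / ζ))).congr_deriv ?_
    simp only [id]
    field_simp
  have hpow : ∀ x : ℝ, HasDerivAt (fun y : ℝ => y ^ p) (p * x ^ (p - 1)) x :=
    fun x => Real.hasDerivAt_rpow_const (Or.inr hp)
  have hibp := intervalIntegral.integral_mul_deriv_eq_deriv_mul (a := 0) (b := 1)
    (fun x _ => hexp x) (fun x _ => hpow x)
    ((by fun_prop : Continuous fun x : ℝ => Real.exp (-ζ * x / ρ)).intervalIntegrable 0 1)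
    (continuousOn_const.mul
      (continuousOn_id.rpow_const fun _ _ => Or.inr (by linarith))).intervalIntegrable
  have hconst : ∫ x in (0:ℝ)..1, -(ρ / ζ) * Real.exp (-ζ * x / ρ) * (p * x ^ (p - 1)) =
      -(p * ρ / ζ) * ∫ x in (0:ℝ)..1, Real.exp (-ζ * x / ρ) * x ^ (p - 1) := by
    rw [← intervalIntegral.integral_const_mul]
    exact intervalIntegral.integral_congr fun x _ => by ring
  rw [hconst, Real.zero_rpow (by linarith), Real.one_rpow] at hibp
  have hboundary : 0 ≤ ρ / ζ * Real.exp (-ζ * 1 / ρ) := by positivity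
  linarith

theorem natCast_div_mem_Ico {d : ℕ} {γ : ℝ} (hγ : (d : ℝ) < γ) : (d : ℝ) / γ ∈ Set.Ico 0 1 := by
  rcases (Nat.cast_nonneg d : (0 : ℝ) ≤ d).eq_or_lt with hd | hd
  · simp [← hd]
  · have hγ₀ : 0 < γ := hd.trans hγ
    exact ⟨by positivity, (div_lt_one hγ₀).2 hγ⟩

theorem integral_exp_mul_rpow_nonneg (ξ ρ p : ℝ) :
    0 ≤ ∫ u in (0:ℝ)..1, Real.exp (ξ * u / ρ) * u ^ p :=
  intervalIntegral.integral_nonneg zero_le_one fun _ hu =>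
    mul_nonneg (Real.exp_nonneg _) (Real.rpow_nonneg hu.1 _)

theorem kt_nonneg {d : ℕ} {γ : ℝ} (hγ : (d : ℝ) < γ) (r ξ : ℝ) (n : ℕ) : 0 ≤ kt d γ r ξ n := by
  have hc := (natCast_div_mem_Ico hγ).2
  exact mul_nonneg (by linarith) (integral_exp_mul_rpow_nonneg _ _ _)

theorem kt_succ_le {d : ℕ} {γ r ζ : ℝ} (hγ : (d : ℝ) < γ) (hρ : 0 < rho d r) (hζ : 0 < ζ)
    {n : ℕ} (hn : 2 ≤ n) :
    kt d γ r (-ζ) (n + 1) ≤ n * rho d r / ζ * kt d γ r (-ζ) n := by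
  obtain ⟨hc₀, hc₁⟩ := natCast_div_mem_Ico hγ
  have hn' : (2 : ℝ) ≤ n := by exact_mod_cast hn
  set c := (d : ℝ) / γ
  set J : ℝ → ℝ := fun p => ∫ u in (0:ℝ)..1, Real.exp (-ζ * u / rho d r) * u ^ p
  have hkt : ∀ m : ℕ, kt d γ r (-ζ) m = (2 - c) * J (m - 1 - c) := fun _ => rfl
  have hJ : 0 ≤ J (n - c - 1) := integral_exp_mul_rpow_nonneg _ _ _
  calc kt d γ r (-ζ) (n + 1) = (2 - c) * J (n - c) := by rw [hkt]; push_cast; ring_nf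
    _ ≤ (2 - c) * ((n - c) * rho d r / ζ * J (n - c - 1)) := by
        gcongr
        · linarith
        · exact integral_exp_neg_mul_rpow_le hζ hρ (by linarith)
    _ ≤ (2 - c) * (n * rho d r / ζ * J (n - c - 1)) := by gcongr <;> linarith
    _ = n * rho d r / ζ * kt d γ r (-ζ) n := by rw [hkt]; ring_nf

def cumulantTerm (d : ℕ) (γ r ξ t : ℝ) (n : ℕ) : ℂ :=
  (Complex.I * (t : ℂ) / ((rho d r : ℝ) : ℂ)) ^ n * ((kt d γ r ξ n / (n.factorial : ℝ) : ℝ) : ℂ)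

theorem qk_eq_sum_range (d : ℕ) (γ r ξ : ℝ) (k : ℕ) (t : ℝ) :
    qk d γ r ξ k t = ((rho d r : ℝ) : ℂ) ^ 2 * ∑ i ∈ range k, cumulantTerm d γ r ξ t (i + 3) := by
  rw [range_eq_Ico, sum_Ico_add', zero_add, show k + 3 = k + 2 + 1 from rfl,
    Ico_add_one_right_eq_Icc]
  rfl

theorem rk_eq_tsum (d : ℕ) (γ r ξ : ℝ) (k : ℕ) (t : ℝ) :
    rk d γ r ξ k t = ((rho d r : ℝ) : ℂ) ^ 2 * ∑' i, cumulantTerm d γ r ξ t (i + k + 3) :=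
  rfl

section

variable {d : ℕ} {γ r ζ : ℝ} (hγ : (d : ℝ) < γ) (hρ : 0 < rho d r) (hζ : 0 < ζ) (t : ℝ)
include hγ hρ

theorem norm_cumulantTerm (ξ : ℝ) (n : ℕ) :
    ‖cumulantTerm d γ r ξ t n‖ = (|t| / rho d r) ^ n * (kt d γ r ξ n / n.factorial) := by
  simp only [cumulantTerm, norm_mul, norm_pow, norm_div, Complex.norm_I, Complex.norm_real,
    Real.norm_eq_abs, one_mul, abs_of_pos hρ, abs_of_nonneg (kt_nonneg hγ r ξ n), Nat.abs_cast]

include hζ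

theorem norm_cumulantTerm_succ_le {n : ℕ} (hn : 2 ≤ n) :
    ‖cumulantTerm d γ r (-ζ) t (n + 1)‖ ≤ |t| / ζ * ‖cumulantTerm d γ r (-ζ) t n‖ := by
  rw [norm_cumulantTerm hγ hρ, norm_cumulantTerm hγ hρ]
  have hkt := kt_nonneg hγ r (-ζ) n
  calc (|t| / rho d r) ^ (n + 1) * (kt d γ r (-ζ) (n + 1) / (n + 1).factorial)
      ≤ (|t| / rho d r) ^ (n + 1) * (n * rho d r / ζ * kt d γ r (-ζ) n / (n + 1).factorial) := by
        gcongr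
        exact kt_succ_le hγ hρ hζ hn
    _ = |t| / ζ * ((|t| / rho d r) ^ n * (kt d γ r (-ζ) n / n.factorial)) * (n / (n + 1)) := by
        have := hρ.ne'
        rw [Nat.factorial_succ, pow_succ]
        push_cast
        field_simp
    _ ≤ |t| / ζ * ((|t| / rho d r) ^ n * (kt d γ r (-ζ) n / n.factorial)) :=
        mul_le_of_le_one_right (by positivity) (div_le_one_of_le₀ (by linarith) (by positivity))

theorem sq_rho_mul_norm_cumulantTerm_three_le :
    rho d r ^ 2 * ‖cumulantTerm d γ r (-ζ) t 3‖ ≤ t ^ 2 * kt d γ r (-ζ) 2 * (|t| / ζ) / 3 := by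
  rw [norm_cumulantTerm hγ hρ, show ((3 : ℕ).factorial : ℝ) = 6 by norm_num [Nat.factorial]]
  calc rho d r ^ 2 * ((|t| / rho d r) ^ 3 * (kt d γ r (-ζ) 3 / 6))
      ≤ rho d r ^ 2 * ((|t| / rho d r) ^ 3 * (2 * rho d r / ζ * kt d γ r (-ζ) 2 / 6)) := by
        gcongr
        exact_mod_cast kt_succ_le hγ hρ hζ le_rfl
    _ = t ^ 2 * kt d γ r (-ζ) 2 * (|t| / ζ) / 3 := by
        have := hρ.ne'
        rw [← sq_abs t]
        field_simp
        ring

theorem summable_norm_cumulantTerm_add_three_and_tsum_le (ht : |t| < ζ / 3) :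
    Summable (fun m => ‖cumulantTerm d γ r (-ζ) t (m + 3)‖) ∧
      rho d r ^ 2 * ∑' m, ‖cumulantTerm d γ r (-ζ) t (m + 3)‖ ≤
        t ^ 2 / 2 * kt d γ r (-ζ) 2 * (|t| / ζ) := by
  have hkt := kt_nonneg hγ r (-ζ) 2
  have hx : |t| / ζ < 1 / 3 := by rw [div_lt_iff₀ hζ]; linarith
  obtain ⟨hsum, htsum⟩ := summable_and_tsum_le_of_succ_le_mul
    (u := fun m => ‖cumulantTerm d γ r (-ζ) t (m + 3)‖) (fun _ => norm_nonneg _) (by positivity) (by linarith) (fun m => norm_cumulantTerm_succ_le hγ hρ hζ t (by omega))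
  refine ⟨hsum, ?_⟩
  calc rho d r ^ 2 * ∑' m, ‖cumulantTerm d γ r (-ζ) t (m + 3)‖
      ≤ rho d r ^ 2 * ‖cumulantTerm d γ r (-ζ) t 3‖ / (1 - |t| / ζ) := by
        rw [mul_div_assoc]; gcongr
    _ ≤ t ^ 2 * kt d γ r (-ζ) 2 * (|t| / ζ) / 3 / (2 / 3) := by
        gcongr
        · exact sq_rho_mul_norm_cumulantTerm_three_le hγ hρ hζ t
        · linarith
    _ = t ^ 2 / 2 * kt d γ r (-ζ) 2 * (|t| / ζ) := by ring

end

theorem qk_est_lower_general (d : ℕ) (γ : ℝ) (hγ : (d : ℝ) < γ)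
    (r : ℝ) (hr : 1 ≤ r) (ζ : ℝ) (hζ : 0 < ζ) (k : ℕ)
    (t : ℝ) (ht : |t| < ζ / 3) :
    max ‖qk d γ r (-ζ) k t‖
        ‖qk d γ r (-ζ) k t + rk d γ r (-ζ) k t‖ ≤
      t ^ 2 / 2 * kt d γ r (-ζ) 2 * (|t| / ζ) ∧
    t ^ 2 / 2 * kt d γ r (-ζ) 2 * (|t| / ζ) ≤ t ^ 2 / 4 * kt d γ r (-ζ) 2 := by
  have hρ : 0 < rho d r := Real.rpow_pos_of_pos (by linarith) _
  obtain ⟨hsum, hbound⟩ := summable_norm_cumulantTerm_add_three_and_tsum_le hγ hρ hζ t ht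
  have hρ_sq : ‖((rho d r : ℝ) : ℂ) ^ 2‖ = rho d r ^ 2 := by
    rw [norm_pow, Complex.norm_real, Real.norm_of_nonneg hρ.le]
  have hqk_add_rk : qk d γ r (-ζ) k t + rk d γ r (-ζ) k t =
      ((rho d r : ℝ) : ℂ) ^ 2 * ∑' m, cumulantTerm d γ r (-ζ) t (m + 3) := by
    rw [qk_eq_sum_range, rk_eq_tsum, ← mul_add, hsum.of_norm.sum_add_tsum_nat_add k]
  refine ⟨max_le ?_ ?_, ?_⟩
  · rw [qk_eq_sum_range, norm_mul, hρ_sq]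
    refine (mul_le_mul_of_nonneg_left ?_ (by positivity)).trans hbound
    exact (norm_sum_le _ _).trans (hsum.sum_le_tsum _ fun _ _ => norm_nonneg _)
  · rw [hqk_add_rk, norm_mul, hρ_sq]
    exact (mul_le_mul_of_nonneg_left (norm_tsum_le_tsum_norm hsum) (by positivity)).trans hbound
  · have hkt := kt_nonneg hγ r (-ζ) 2
    have hx : 2 * (|t| / ζ) ≤ 1 := by rw [← mul_div_assoc, div_le_one hζ]; linarith
    calc t ^ 2 / 2 * kt d γ r (-ζ) 2 * (|t| / ζ)
        = t ^ 2 / 4 * kt d γ r (-ζ) 2 * (2 * (|t| / ζ)) := by ring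
      _ ≤ t ^ 2 / 4 * kt d γ r (-ζ) 2 := mul_le_of_le_one_right (by positivity) hx

/-- Lemma 3.8 (lower tail, ξ = −ζ): bound on q_k and q_k + r_k for |t| < ζ/3. -/
theorem qk_est_lower (d : ℕ) (hd : 1 ≤ d) (γ : ℝ) (hγ : (d : ℝ) < γ)
    (r : ℝ) (hr : 1 ≤ r) (ζ : ℝ) (hζ : 0 < ζ) (k : ℕ) (hk : 1 ≤ k)
    (t : ℝ) (ht : |t| < ζ / 3) :
    max ‖qk d γ r (-ζ) k t‖
        ‖qk d γ r (-ζ) k t + rk d γ r (-ζ) k t‖ ≤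
      t ^ 2 / 2 * kt d γ r (-ζ) 2 * (|t| / ζ) ∧
    t ^ 2 / 2 * kt d γ r (-ζ) 2 * (|t| / ζ) ≤ t ^ 2 / 4 * kt d γ r (-ζ) 2 :=
  qk_est_lower_general d γ hγ r hr ζ hζ k t ht
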